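/- arXiv:2310.16555 — 2 statements merged into one kernel-verified Lean document; each statement's English description precedes it below -/
import Mathlib

section
/- Assume p(X,Y) is fully supported. The solutions to the Intertwining Information Bottleneck problem with parameter λ = I(X;Y) are exactly the channels of the form q = γ∘π, where γ ranges over congruent channels from {1,…,n} to T and π is the deterministic channel from X×Y to {1,…,n} sending each (x,y) to the index of its equivalence class under ~. -/
/-!
Coarse-graining through a channel κ can only lose divergence,
`D(κ p(X,Y) ‖ κ p(X)p(Y)) ≤ D(p(X,Y) ‖ p(X)p(Y)) = I(X;Y)`, and by the log-sum inequality applied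
to each output `t` equality holds exactly when the likelihood ratio `p(x,y)/(p(x)p(y))` is
constant on the support of `κ(t|·)`, i.e. when `T` determines the class `π(X,Y)`. For such a
channel Gibbs' inequality, comparing the joint law of `((X,Y), T)` with the one under which
`(X,Y)` and `T` are independent given `π`, gives `I(X,Y;T) ≥ H(π(X,Y))`, with equality exactly
when `κ(·|x,y)` depends only on the class of `(x,y)`. The deterministic channel `π` is feasible
and attains `H(π(X,Y))`, so the solutions are the channels that are constant on classes and
send distinct classes to disjoint supports: the channels `γ ∘ π` with `γ` congruent.
-/

noncomputable section

/-- `p` is a probability distribution on the finite set `X × Y`. -/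
def IsJointDist {X Y : Type} [Fintype X] [Fintype Y] (p : X → Y → ℝ) : Prop :=
  (∀ x y, 0 ≤ p x y) ∧ (∑ x, ∑ y, p x y) = 1

/-- Marginal distribution `p(X)`. -/
def margX {X Y : Type} [Fintype Y] (p : X → Y → ℝ) (x : X) : ℝ := ∑ y, p x y

/-- Marginal distribution `p(Y)`. -/
def margY {X Y : Type} [Fintype X] (p : X → Y → ℝ) (y : Y) : ℝ := ∑ x, p x y

/-- Mutual information `I(X;Y) = D(p(X,Y) ‖ p(X)p(Y))`. -/
def miXY {X Y : Type} [Fintype X] [Fintype Y] (p : X → Y → ℝ) : ℝ :=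
  ∑ x, ∑ y, p x y * Real.log (p x y / (margX p x * margY p y))

/-- A channel from `A` to the countable bottleneck space `T := ℕ`. -/
def IsChannelNat {A : Type} (κ : A → ℕ → ℝ) : Prop :=
  (∀ a t, 0 ≤ κ a t) ∧ ∀ a, (∑' t, κ a t) = 1

/-- Pushforward of the distribution `w` on `A` through the channel `κ`. -/
def pushNat {A : Type} [Fintype A] (w : A → ℝ) (κ : A → ℕ → ℝ) (t : ℕ) : ℝ :=
  ∑ a, w a * κ a t

/-- Kullback–Leibler divergence between distributions on `ℕ`. -/
def klNat (u v : ℕ → ℝ) : ℝ := ∑' t, u t * Real.log (u t / v t)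

/-- Mutual information between the input (distributed as `w`) and the output of
the channel `κ`, computed from the joint distribution `w(a) κ(t|a)`. -/
def miNat {A : Type} [Fintype A] (w : A → ℝ) (κ : A → ℕ → ℝ) : ℝ :=
  ∑ a, ∑' t, w a * κ a t * Real.log (κ a t / pushNat w κ t)

/-- The joint distribution `p(X,Y)` as a weight on `X × Y`. -/
def jointW {X Y : Type} (p : X → Y → ℝ) : X × Y → ℝ := fun a => p a.1 a.2

/-- The product of the marginals `p(X)p(Y)` as a weight on `X × Y`. -/
def splitW {X Y : Type} [Fintype X] [Fintype Y] (p : X → Y → ℝ) : X × Y → ℝ :=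
  fun a => margX p a.1 * margY p a.2

/-- `κ` solves the Intertwining Information Bottleneck problem with parameter `lam`:
it is a channel satisfying the constraint `D(κ(p(X,Y)) ‖ κ(p(X)p(Y))) = lam` and it
minimises `I_κ(X,Y;T)` among all channels satisfying this constraint. -/
def SolvesIIB {X Y : Type} [Fintype X] [Fintype Y] (p : X → Y → ℝ)
    (κ : X × Y → ℕ → ℝ) (lam : ℝ) : Prop :=
  IsChannelNat κ ∧
  klNat (pushNat (jointW p) κ) (pushNat (splitW p) κ) = lam ∧
  ∀ κ' : X × Y → ℕ → ℝ, IsChannelNat κ' →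
    klNat (pushNat (jointW p) κ') (pushNat (splitW p) κ') = lam →
    miNat (jointW p) κ ≤ miNat (jointW p) κ'

/-- The ratio `p(x,y)/(p(x)p(y))` whose level sets define the equivalence relation `∼`. -/
def ratio {X Y : Type} [Fintype X] [Fintype Y] (p : X → Y → ℝ) (a : X × Y) : ℝ :=
  p a.1 a.2 / (margX p a.1 * margY p a.2)

/-- A channel `γ` is congruent if distinct inputs have disjoint output supports. -/
def IsCongruentNat {A : Type} (γ : A → ℕ → ℝ) : Prop :=
  ∀ a a', a ≠ a' → Disjoint (Function.support (γ a)) (Function.support (γ a'))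

open Real Finset InformationTheory

lemma mul_log_div_sub_sub_eq_mul_klFun (x : ℝ) {y : ℝ} (hy : y ≠ 0) :
    x * log (x / y) - (x - y) = y * klFun (x / y) := by
  rw [klFun_apply]
  field_simp
  ring

lemma sub_le_mul_log_div {x y : ℝ} (hx : 0 ≤ x) (hy : 0 ≤ y) (hxy : y = 0 → x = 0) :
    x - y ≤ x * log (x / y) := by
  rcases hy.eq_or_lt with rfl | hy
  · simp [hxy rfl]
  · have := mul_log_div_sub_sub_eq_mul_klFun x hy.ne'
    linarith [mul_nonneg hy.le (klFun_nonneg (div_nonneg hx hy.le))]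

lemma mul_log_div_eq_sub_iff {x y : ℝ} (hx : 0 ≤ x) (hy : 0 ≤ y) (hxy : y = 0 → x = 0) :
    x * log (x / y) = x - y ↔ x = y := by
  rcases hy.eq_or_lt with rfl | hy
  · simp [hxy rfl]
  · rw [← sub_eq_zero, mul_log_div_sub_sub_eq_mul_klFun x hy.ne', mul_eq_zero,
      klFun_eq_zero_iff (div_nonneg hx hy.le), div_eq_one_iff_eq hy.ne']
    simp [hy.ne']

section Gibbs

variable {ι : Type*} [Fintype ι] {x y : ι → ℝ}

lemma sum_mul_log_div_eq_sum_sub (hsum : ∑ i, x i = ∑ i, y i) :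
    ∑ i, x i * log (x i / y i) = ∑ i, (x i * log (x i / y i) - (x i - y i)) := by
  simp only [sum_sub_distrib, hsum, sub_self, sub_zero]

theorem sum_mul_log_div_nonneg (hx : ∀ i, 0 ≤ x i) (hy : ∀ i, 0 ≤ y i)
    (hxy : ∀ i, y i = 0 → x i = 0) (hsum : ∑ i, x i = ∑ i, y i) :
    0 ≤ ∑ i, x i * log (x i / y i) := by
  rw [sum_mul_log_div_eq_sum_sub hsum]
  exact sum_nonneg fun i _ => sub_nonneg.mpr (sub_le_mul_log_div (hx i) (hy i) (hxy i))

theorem sum_mul_log_div_eq_zero_iff (hx : ∀ i, 0 ≤ x i) (hy : ∀ i, 0 ≤ y i)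
    (hxy : ∀ i, y i = 0 → x i = 0) (hsum : ∑ i, x i = ∑ i, y i) :
    ∑ i, x i * log (x i / y i) = 0 ↔ ∀ i, x i = y i := by
  rw [sum_mul_log_div_eq_sum_sub hsum, sum_eq_zero_iff_of_nonneg fun i _ =>
    sub_nonneg.mpr (sub_le_mul_log_div (hx i) (hy i) (hxy i))]
  exact forall_congr' fun i => by
    simp [sub_eq_zero, mul_log_div_eq_sub_iff (hx i) (hy i) (hxy i)]

/-- Rescaling `y` to the total mass of `x` reduces the log-sum inequality to Gibbs' inequality. -/
lemma sum_mul_log_div_sub_eq (hx : ∀ i, 0 ≤ x i) (hy : ∀ i, 0 ≤ y i)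
    (hxy : ∀ i, y i = 0 → x i = 0) :
    ∑ i, x i * log (x i / y i) - (∑ i, x i) * log ((∑ i, x i) / ∑ i, y i) =
      ∑ i, x i * log (x i / (y i * ((∑ j, x j) / ∑ j, y j))) := by
  rw [sum_mul, ← sum_sub_distrib]
  refine sum_congr rfl fun i _ => ?_
  rcases (hx i).eq_or_lt with hxi | hxi
  · simp [← hxi]
  have hyi : y i ≠ 0 := mt (hxy i) hxi.ne'
  have hX : 0 < ∑ j, x j := hxi.trans_le (single_le_sum (fun j _ => hx j) (mem_univ i))
  have hY : 0 < ∑ j, y j := (hy i).lt_of_ne' hyi |>.trans_le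
    (single_le_sum (fun j _ => hy j) (mem_univ i))
  rw [← div_div, log_div (div_ne_zero hxi.ne' hyi) (div_ne_zero hX.ne' hY.ne')]
  ring

lemma eq_zero_of_sum_eq_zero_of_abs_cont (hy : ∀ i, 0 ≤ y i)
    (hxy : ∀ i, y i = 0 → x i = 0) (hY : ∑ j, y j = 0) (i : ι) : x i = 0 :=
  hxy i ((sum_eq_zero_iff_of_nonneg fun j _ => hy j).mp hY i (mem_univ i))

lemma rescaled_nonneg_and_abs_cont (hx : ∀ i, 0 ≤ x i) (hy : ∀ i, 0 ≤ y i)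
    (hxy : ∀ i, y i = 0 → x i = 0) (i : ι) :
    0 ≤ y i * ((∑ j, x j) / ∑ j, y j) ∧ (y i * ((∑ j, x j) / ∑ j, y j) = 0 → x i = 0) := by
  refine ⟨mul_nonneg (hy i) (div_nonneg (sum_nonneg fun j _ => hx j)
    (sum_nonneg fun j _ => hy j)), fun h => ?_⟩
  rcases mul_eq_zero.mp h with h | h
  · exact hxy i h
  rcases div_eq_zero_iff.mp h with h | h
  · exact (sum_eq_zero_iff_of_nonneg fun j _ => hx j).mp h i (mem_univ i)
  · exact eq_zero_of_sum_eq_zero_of_abs_cont hy hxy h i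

lemma sum_mul_div_sum_eq (hy : ∀ i, 0 ≤ y i)
    (hxy : ∀ i, y i = 0 → x i = 0) :
    ∑ i, y i * ((∑ j, x j) / ∑ j, y j) = ∑ i, x i := by
  rw [← sum_mul]
  rcases eq_or_ne (∑ j, y j) 0 with hY | hY
  · simp [hY, eq_zero_of_sum_eq_zero_of_abs_cont hy hxy hY]
  · exact mul_div_cancel₀ _ hY

theorem sum_mul_log_div_sum_le (hx : ∀ i, 0 ≤ x i) (hy : ∀ i, 0 ≤ y i)
    (hxy : ∀ i, y i = 0 → x i = 0) :
    (∑ i, x i) * log ((∑ i, x i) / ∑ i, y i) ≤ ∑ i, x i * log (x i / y i) := by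
  rw [← sub_nonneg, sum_mul_log_div_sub_eq hx hy hxy]
  exact sum_mul_log_div_nonneg hx (fun i => (rescaled_nonneg_and_abs_cont hx hy hxy i).1)
    (fun i => (rescaled_nonneg_and_abs_cont hx hy hxy i).2) (sum_mul_div_sum_eq hy hxy).symm

theorem sum_mul_log_div_sum_eq_iff (hx : ∀ i, 0 ≤ x i) (hy : ∀ i, 0 ≤ y i)
    (hxy : ∀ i, y i = 0 → x i = 0) :
    (∑ i, x i) * log ((∑ i, x i) / ∑ i, y i) = ∑ i, x i * log (x i / y i) ↔
      ∀ i, x i * ∑ j, y j = y i * ∑ j, x j := by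
  rw [eq_comm, ← sub_eq_zero, sum_mul_log_div_sub_eq hx hy hxy,
    sum_mul_log_div_eq_zero_iff hx (fun i => (rescaled_nonneg_and_abs_cont hx hy hxy i).1)
      (fun i => (rescaled_nonneg_and_abs_cont hx hy hxy i).2) (sum_mul_div_sum_eq hy hxy).symm]
  rcases eq_or_ne (∑ j, y j) 0 with hY | hY
  · simp [hY, eq_zero_of_sum_eq_zero_of_abs_cont hy hxy hY]
  · exact forall_congr' fun i => by rw [mul_div_assoc', eq_div_iff hY]

end Gibbs

lemma Summable.of_le_of_le {ι : Type*} {f g h : ι → ℝ} (hg : Summable g) (hh : Summable h)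
    (hgf : ∀ i, g i ≤ f i) (hfh : ∀ i, f i ≤ h i) : Summable f := by
  have : Summable fun i => f i - g i := Summable.of_nonneg_of_le
    (fun i => sub_nonneg.mpr (hgf i)) (fun i => sub_le_sub_right (hfh i) _) (hh.sub hg)
  simpa using this.add hg

lemma Summable.tsum_eq_tsum_iff_of_le {ι : Type*} {f g : ι → ℝ} (hf : Summable f)
    (hg : Summable g) (h : ∀ i, f i ≤ g i) : ∑' i, f i = ∑' i, g i ↔ ∀ i, f i = g i :=
  ⟨fun heq i => (h i).eq_of_not_lt fun hi => (Summable.tsum_lt_tsum h hi hf hg).ne heq,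
    fun h' => tsum_congr h'⟩

namespace IsChannelNat

variable {A : Type} {κ : A → ℕ → ℝ}

lemma summable (hκ : IsChannelNat κ) (a : A) : Summable (κ a) := by
  by_contra h
  simpa [tsum_eq_zero_of_not_summable h] using hκ.2 a

variable [Fintype A]

lemma summable_sum_mul (hκ : IsChannelNat κ) (c : A → ℝ) :
    Summable fun t => ∑ a, c a * κ a t :=
  summable_sum fun a _ => (hκ.summable a).mul_left (c a)

lemma tsum_sum_mul (hκ : IsChannelNat κ) (c : A → ℝ) : ∑' t, ∑ a, c a * κ a t = ∑ a, c a := by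
  rw [Summable.tsum_finsetSum fun a _ => (hκ.summable a).mul_left (c a)]
  simp [tsum_mul_left, hκ.2]

end IsChannelNat

section PushNat

variable {A : Type} [Fintype A] {w : A → ℝ} {κ : A → ℕ → ℝ}

lemma pushNat_nonneg (hw : ∀ a, 0 ≤ w a) (hκ : ∀ a t, 0 ≤ κ a t) (t : ℕ) :
    0 ≤ pushNat w κ t :=
  sum_nonneg fun a _ => mul_nonneg (hw a) (hκ a t)

lemma mul_le_pushNat (hw : ∀ a, 0 ≤ w a) (hκ : ∀ a t, 0 ≤ κ a t) (a : A) (t : ℕ) :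
    w a * κ a t ≤ pushNat w κ t :=
  single_le_sum (f := fun b => w b * κ b t) (fun b _ => mul_nonneg (hw b) (hκ b t)) (mem_univ a)

lemma pushNat_pos (hw : ∀ a, 0 < w a) (hκ : ∀ a t, 0 ≤ κ a t) {a : A} {t : ℕ}
    (ha : κ a t ≠ 0) : 0 < pushNat w κ t :=
  (mul_pos (hw a) ((hκ a t).lt_of_ne' ha)).trans_le (mul_le_pushNat (fun b => (hw b).le) hκ a t)

lemma pushNat_eq_zero_of_pushNat_eq_zero {s : A → ℝ} (hs : ∀ a, 0 < s a)
    (hκ : ∀ a t, 0 ≤ κ a t) {t : ℕ} (h : pushNat s κ t = 0) : pushNat w κ t = 0 :=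
  sum_eq_zero fun a _ => by
    rw [of_not_not fun ha => (pushNat_pos hs hκ ha).ne' h, mul_zero]

end PushNat

section DataProcessing

variable {A : Type} [Fintype A] {w s : A → ℝ} {κ : A → ℕ → ℝ}

lemma sum_mul_log_div_mul_right (hκ : ∀ a t, 0 ≤ κ a t) (t : ℕ) :
    ∑ a, w a * κ a t * log (w a * κ a t / (s a * κ a t)) =
      ∑ a, w a * log (w a / s a) * κ a t := by
  refine sum_congr rfl fun a _ => ?_
  rcases (hκ a t).eq_or_lt with h | h
  · simp [← h]
  · rw [mul_div_mul_right _ _ h.ne']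
    ring

lemma mul_log_div_pushNat_le (hw : ∀ a, 0 ≤ w a) (hs : ∀ a, 0 < s a) (hκ : ∀ a t, 0 ≤ κ a t)
    (t : ℕ) :
    pushNat w κ t * log (pushNat w κ t / pushNat s κ t) ≤ ∑ a, w a * log (w a / s a) * κ a t := by
  rw [← sum_mul_log_div_mul_right hκ]
  exact sum_mul_log_div_sum_le (fun a => mul_nonneg (hw a) (hκ a t))
    (fun a => mul_nonneg (hs a).le (hκ a t))
    fun a h => by rw [(mul_eq_zero.mp h).resolve_left (hs a).ne', mul_zero]

lemma mul_log_div_pushNat_eq_iff (hw : ∀ a, 0 ≤ w a) (hs : ∀ a, 0 < s a)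
    (hκ : ∀ a t, 0 ≤ κ a t) (t : ℕ) :
    pushNat w κ t * log (pushNat w κ t / pushNat s κ t) = ∑ a, w a * log (w a / s a) * κ a t ↔
      ∀ a, w a * κ a t * pushNat s κ t = s a * κ a t * pushNat w κ t := by
  rw [← sum_mul_log_div_mul_right hκ]
  exact sum_mul_log_div_sum_eq_iff (fun a => mul_nonneg (hw a) (hκ a t))
    (fun a => mul_nonneg (hs a).le (hκ a t))
    fun a h => by rw [(mul_eq_zero.mp h).resolve_left (hs a).ne', mul_zero]

lemma forall_mul_pushNat_eq_iff (hs : ∀ a, 0 < s a) (hκ : ∀ a t, 0 ≤ κ a t) (t : ℕ) :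
    (∀ a, w a * κ a t * pushNat s κ t = s a * κ a t * pushNat w κ t) ↔
      ∀ a b, κ a t ≠ 0 → κ b t ≠ 0 → w a / s a = w b / s b := by
  have hratio : ∀ a, κ a t ≠ 0 →
      (w a * κ a t * pushNat s κ t = s a * κ a t * pushNat w κ t ↔
        w a / s a = pushNat w κ t / pushNat s κ t) := fun a ha => by
    rw [div_eq_div_iff (hs a).ne' (pushNat_pos hs hκ ha).ne', mul_right_comm, mul_right_comm (s a),
      mul_left_inj' ha, mul_comm (s a)]
  refine ⟨fun h a b ha hb => ((hratio a ha).mp (h a)).trans ((hratio b hb).mp (h b)).symm,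
    fun h a => ?_⟩
  by_cases ha : κ a t = 0
  · simp [ha]
  rw [mul_right_comm, mul_right_comm (s a), mul_left_inj' ha, pushNat, pushNat, mul_sum, mul_sum]
  refine sum_congr rfl fun b _ => ?_
  by_cases hb : κ b t = 0
  · simp [hb]
  have := (div_eq_div_iff (hs a).ne' (hs b).ne').mp (h a b ha hb)
  linear_combination κ b t * this

lemma summable_mul_log_div_pushNat (hw : ∀ a, 0 ≤ w a) (hs : ∀ a, 0 < s a)
    (hκ : IsChannelNat κ) :
    Summable fun t => pushNat w κ t * log (pushNat w κ t / pushNat s κ t) :=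
  Summable.of_le_of_le ((hκ.summable_sum_mul w).sub (hκ.summable_sum_mul s))
    (hκ.summable_sum_mul _)
    (fun t => sub_le_mul_log_div (pushNat_nonneg hw hκ.1 t) (pushNat_nonneg (fun a => (hs a).le) hκ.1 t)
      (pushNat_eq_zero_of_pushNat_eq_zero hs hκ.1))
    (mul_log_div_pushNat_le hw hs hκ.1)

theorem klNat_pushNat_le (hw : ∀ a, 0 ≤ w a) (hs : ∀ a, 0 < s a) (hκ : IsChannelNat κ) :
    klNat (pushNat w κ) (pushNat s κ) ≤ ∑ a, w a * log (w a / s a) := by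
  rw [← hκ.tsum_sum_mul]
  exact Summable.tsum_le_tsum (mul_log_div_pushNat_le hw hs hκ.1)
    (summable_mul_log_div_pushNat hw hs hκ) (hκ.summable_sum_mul _)

theorem klNat_pushNat_eq_iff (hw : ∀ a, 0 ≤ w a) (hs : ∀ a, 0 < s a) (hκ : IsChannelNat κ) :
    klNat (pushNat w κ) (pushNat s κ) = ∑ a, w a * log (w a / s a) ↔
      ∀ t a b, κ a t ≠ 0 → κ b t ≠ 0 → w a / s a = w b / s b := by
  rw [← hκ.tsum_sum_mul, klNat, Summable.tsum_eq_tsum_iff_of_le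
    (summable_mul_log_div_pushNat hw hs hκ) (hκ.summable_sum_mul _)
    (mul_log_div_pushNat_le hw hs hκ.1)]
  exact forall_congr' fun t =>
    (mul_log_div_pushNat_eq_iff hw hs hκ.1 t).trans (forall_mul_pushNat_eq_iff hs hκ.1 t)

end DataProcessing

def DeterminesClass {A B : Type*} (κ : A → ℕ → ℝ) (idx : A → B) : Prop :=
  ∀ t a b, κ a t ≠ 0 → κ b t ≠ 0 → idx a = idx b

section ClassEntropy

variable {A : Type} {B : Type*} [Fintype A] [DecidableEq B]

def fiberSum (idx : A → B) (f : A → ℝ) (j : B) : ℝ := ∑ a with idx a = j, f a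

def classEntropy (w : A → ℝ) (idx : A → B) : ℝ := -∑ a, w a * log (fiberSum idx w (idx a))

/-- The law of the output given the class of the input, when the input has law `w`. -/
def classAverage (w : A → ℝ) (idx : A → B) (κ : A → ℕ → ℝ) (a : A) (t : ℕ) : ℝ :=
  fiberSum idx (fun b => w b * κ b t) (idx a) / fiberSum idx w (idx a)

variable {w : A → ℝ} {κ : A → ℕ → ℝ} {idx : A → B}

lemma fiberSum_pos (hw : ∀ a, 0 < w a) (a : A) : 0 < fiberSum idx w (idx a) :=
  sum_pos (fun b _ => hw b) ⟨a, by simp⟩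

lemma sum_mul_classAverage (hw : ∀ a, 0 < w a) (t : ℕ) :
    ∑ a, w a * classAverage w idx κ a t = pushNat w κ t := by
  have hmaps : ∀ a ∈ (univ : Finset A), idx a ∈ univ.image idx :=
    fun a _ => mem_image_of_mem idx (mem_univ a)
  rw [pushNat, ← sum_fiberwise_of_maps_to hmaps, ← sum_fiberwise_of_maps_to hmaps]
  refine sum_congr rfl fun j hj => ?_
  obtain ⟨a, -, rfl⟩ := mem_image.mp hj
  rw [sum_congr rfl fun b hb => by rw [classAverage, (mem_filter.mp hb).2], ← sum_mul]
  exact mul_div_cancel₀ _ (fiberSum_pos hw a).ne'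

lemma classAverage_nonneg (hw : ∀ a, 0 < w a) (hκ : ∀ a t, 0 ≤ κ a t) (a : A) (t : ℕ) :
    0 ≤ classAverage w idx κ a t :=
  div_nonneg (sum_nonneg fun b _ => mul_nonneg (hw b).le (hκ b t)) (fiberSum_pos hw a).le

lemma eq_zero_of_classAverage_eq_zero (hw : ∀ a, 0 < w a) (hκ : ∀ a t, 0 ≤ κ a t) {a : A}
    {t : ℕ} (h : classAverage w idx κ a t = 0) : κ a t = 0 := by
  have hsum := (div_eq_zero_iff.mp h).resolve_right (fiberSum_pos hw a).ne'
  have := (sum_eq_zero_iff_of_nonneg fun b _ => mul_nonneg (hw b).le (hκ b t)).mp hsum a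
    (by simp)
  exact (mul_eq_zero.mp this).resolve_left (hw a).ne'

lemma classAverage_eq_pushNat_div (hdet : DeterminesClass κ idx) {a : A} {t : ℕ}
    (ha : κ a t ≠ 0) :
    classAverage w idx κ a t = pushNat w κ t / fiberSum idx w (idx a) := by
  rw [classAverage, fiberSum, sum_filter_of_ne fun b _ hb => hdet t b a (right_ne_zero_of_mul hb) ha]
  rfl

lemma forall_eq_classAverage_iff (hw : ∀ a, 0 < w a) (t : ℕ) :
    (∀ a, κ a t = classAverage w idx κ a t) ↔ ∀ a b, idx a = idx b → κ a t = κ b t := by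
  refine ⟨fun h a b hab => by rw [h a, h b, classAverage, classAverage, hab], fun h a => ?_⟩
  rw [classAverage, fiberSum, sum_congr rfl fun b hb => by rw [h b a (mem_filter.mp hb).2],
    ← sum_mul, ← fiberSum, mul_div_cancel_left₀ _ (fiberSum_pos hw a).ne']

lemma mul_log_div_mul_classAverage (hw : ∀ a, 0 < w a) (hκ : ∀ a t, 0 ≤ κ a t)
    (hdet : DeterminesClass κ idx) (a : A) (t : ℕ) :
    w a * κ a t * log (w a * κ a t / (w a * classAverage w idx κ a t)) =
      w a * κ a t * log (κ a t / pushNat w κ t) + w a * log (fiberSum idx w (idx a)) * κ a t := by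
  by_cases ha : κ a t = 0
  · simp [ha]
  have hu := pushNat_pos hw hκ ha
  have hW := fiberSum_pos (idx := idx) hw a
  rw [classAverage_eq_pushNat_div hdet ha, mul_div_mul_left _ _ (hw a).ne', div_div_eq_mul_div,
    mul_div_right_comm, log_mul (div_ne_zero ha hu.ne') hW.ne']
  ring

lemma sum_mul_log_div_mul_classAverage (hw : ∀ a, 0 < w a) (hκ : ∀ a t, 0 ≤ κ a t)
    (hdet : DeterminesClass κ idx) (t : ℕ) :
    ∑ a, w a * κ a t * log (w a * κ a t / (w a * classAverage w idx κ a t)) =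
      ∑ a, w a * κ a t * log (κ a t / pushNat w κ t) -
        ∑ a, -(w a * log (fiberSum idx w (idx a))) * κ a t := by
  simp only [mul_log_div_mul_classAverage hw hκ hdet, sum_add_distrib, neg_mul, sum_neg_distrib,
    sub_neg_eq_add]

/-- Gibbs' inequality between the joint law of input and output and the law under which they
are independent given the class. -/
lemma sum_neg_mul_log_fiberSum_le (hw : ∀ a, 0 < w a) (hκ : ∀ a t, 0 ≤ κ a t)
    (hdet : DeterminesClass κ idx) (t : ℕ) :
    ∑ a, -(w a * log (fiberSum idx w (idx a))) * κ a t ≤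
      ∑ a, w a * κ a t * log (κ a t / pushNat w κ t) := by
  rw [← sub_nonneg, ← sum_mul_log_div_mul_classAverage hw hκ hdet]
  exact sum_mul_log_div_nonneg (fun a => mul_nonneg (hw a).le (hκ a t))
    (fun a => mul_nonneg (hw a).le (classAverage_nonneg hw hκ a t))
    (fun a h => by
      rw [eq_zero_of_classAverage_eq_zero hw hκ ((mul_eq_zero.mp h).resolve_left (hw a).ne'),
        mul_zero])
    (sum_mul_classAverage hw t).symm

lemma sum_neg_mul_log_fiberSum_eq_iff (hw : ∀ a, 0 < w a) (hκ : ∀ a t, 0 ≤ κ a t)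
    (hdet : DeterminesClass κ idx) (t : ℕ) :
    ∑ a, -(w a * log (fiberSum idx w (idx a))) * κ a t =
        ∑ a, w a * κ a t * log (κ a t / pushNat w κ t) ↔
      ∀ a b, idx a = idx b → κ a t = κ b t := by
  rw [eq_comm, ← sub_eq_zero, ← sum_mul_log_div_mul_classAverage hw hκ hdet,
    sum_mul_log_div_eq_zero_iff (fun a => mul_nonneg (hw a).le (hκ a t))
    (fun a => mul_nonneg (hw a).le (classAverage_nonneg hw hκ a t))
    (fun a h => by
      rw [eq_zero_of_classAverage_eq_zero hw hκ ((mul_eq_zero.mp h).resolve_left (hw a).ne'),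
        mul_zero])
    (sum_mul_classAverage hw t).symm, ← forall_eq_classAverage_iff hw]
  exact forall_congr' fun a => mul_right_inj' (hw a).ne'

lemma mul_mul_log_div_pushNat_le (hw : ∀ a, 0 < w a) (hκ : ∀ a t, 0 ≤ κ a t) (a : A) (t : ℕ) :
    w a * κ a t * log (κ a t / pushNat w κ t) ≤ -(w a * log (w a)) * κ a t := by
  by_cases ha : κ a t = 0
  · simp [ha]
  have hu := pushNat_pos hw hκ ha
  have hle : log (κ a t / pushNat w κ t) ≤ -log (w a) := by
    rw [← log_inv]
    refine log_le_log (div_pos ((hκ a t).lt_of_ne' ha) hu) ?_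
    rw [div_le_iff₀ hu, ← div_eq_inv_mul, le_div_iff₀ (hw a), mul_comm]
    exact mul_le_pushNat (fun b => (hw b).le) hκ a t
  nlinarith [mul_le_mul_of_nonneg_left hle (mul_nonneg (hw a).le (hκ a t))]

lemma summable_mul_mul_log_div_pushNat (hw : ∀ a, 0 < w a) (hκ : IsChannelNat κ) (a : A) :
    Summable fun t => w a * κ a t * log (κ a t / pushNat w κ t) :=
  Summable.of_le_of_le (((hκ.summable a).sub (hκ.summable_sum_mul w)).mul_left (w a))
    ((hκ.summable a).mul_left _)
    (fun t => by
      rw [mul_assoc]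
      exact mul_le_mul_of_nonneg_left (sub_le_mul_log_div (hκ.1 a t)
        (pushNat_nonneg (fun b => (hw b).le) hκ.1 t)
        fun h => of_not_not fun ha => (pushNat_pos hw hκ.1 ha).ne' h) (hw a).le)
    (mul_mul_log_div_pushNat_le hw hκ.1 a)

lemma miNat_eq_tsum_sum (hw : ∀ a, 0 < w a) (hκ : IsChannelNat κ) :
    miNat w κ = ∑' t, ∑ a, w a * κ a t * log (κ a t / pushNat w κ t) :=
  (Summable.tsum_finsetSum fun a _ => summable_mul_mul_log_div_pushNat hw hκ a).symm

lemma classEntropy_eq_tsum_sum (hκ : IsChannelNat κ) :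
    classEntropy w idx = ∑' t, ∑ a, -(w a * log (fiberSum idx w (idx a))) * κ a t := by
  rw [classEntropy, ← sum_neg_distrib, hκ.tsum_sum_mul]

theorem classEntropy_le_miNat (hw : ∀ a, 0 < w a) (hκ : IsChannelNat κ)
    (hdet : DeterminesClass κ idx) : classEntropy w idx ≤ miNat w κ := by
  rw [miNat_eq_tsum_sum hw hκ, classEntropy_eq_tsum_sum hκ]
  exact Summable.tsum_le_tsum (sum_neg_mul_log_fiberSum_le hw hκ.1 hdet)
    (hκ.summable_sum_mul _) (summable_sum fun a _ => summable_mul_mul_log_div_pushNat hw hκ a)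

theorem miNat_eq_classEntropy_iff (hw : ∀ a, 0 < w a) (hκ : IsChannelNat κ)
    (hdet : DeterminesClass κ idx) : miNat w κ = classEntropy w idx ↔ κ.FactorsThrough idx := by
  rw [eq_comm, miNat_eq_tsum_sum hw hκ, classEntropy_eq_tsum_sum hκ,
    Summable.tsum_eq_tsum_iff_of_le (hκ.summable_sum_mul _)
      (summable_sum fun a _ => summable_mul_mul_log_div_pushNat hw hκ a)
      (sum_neg_mul_log_fiberSum_le hw hκ.1 hdet)]
  simp only [sum_neg_mul_log_fiberSum_eq_iff hw hκ.1 hdet]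
  exact ⟨fun h a b hab => funext fun t => h t a b hab, fun h t a b hab => congrFun (h hab) t⟩

end ClassEntropy

lemma exists_channel_determinesClass_factorsThrough {A B : Type} (idx : A → B) {e : B → ℕ}
    (he : e.Injective) :
    ∃ κ : A → ℕ → ℝ, IsChannelNat κ ∧ DeterminesClass κ idx ∧ κ.FactorsThrough idx := by
  refine ⟨fun a t => if t = e (idx a) then 1 else 0, ⟨fun a t => ite_nonneg zero_le_one le_rfl,
    fun a => tsum_ite_eq _ _⟩, fun t a b ha hb => he ?_, fun a b hab => by simp only [hab]⟩
  simp only [ne_eq, ite_eq_right_iff, one_ne_zero, imp_false, not_not] at ha hb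
  rw [← ha, ← hb]

lemma exists_congruent_factorization_iff {A B : Type} {idx : A → B}
    (hsurj : Function.Surjective idx) {q : A → ℕ → ℝ} (hq : IsChannelNat q) :
    (∃ γ : B → ℕ → ℝ, (∀ j t, 0 ≤ γ j t) ∧ (∀ j, ∑' t, γ j t = 1) ∧ IsCongruentNat γ ∧
        ∀ a t, q a t = γ (idx a) t) ↔
      DeterminesClass q idx ∧ q.FactorsThrough idx := by
  constructor
  · rintro ⟨γ, -, -, hcong, hfac⟩
    refine ⟨fun t a b ha hb => ?_, fun a b hab => funext fun t => by rw [hfac, hfac, hab]⟩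
    by_contra hne
    rw [hfac] at ha hb
    exact Set.disjoint_left.mp (hcong _ _ hne) ha hb
  · rintro ⟨hdet, hfac⟩
    refine ⟨fun j => q (Function.surjInv hsurj j), fun j => hq.1 _, fun j => hq.2 _,
      fun j j' hne => Set.disjoint_left.mpr fun t ht ht' => hne ?_,
      fun a t => congrFun (hfac (Function.surjInv_eq hsurj (idx a)).symm) t⟩
    simpa only [Function.surjInv_eq] using hdet t _ _ ht ht'

lemma solvesIIB_iff_of_le {X Y : Type} [Fintype X] [Fintype Y] {p : X → Y → ℝ} {lam m : ℝ}
    (hle : ∀ κ, IsChannelNat κ → klNat (pushNat (jointW p) κ) (pushNat (splitW p) κ) = lam →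
      m ≤ miNat (jointW p) κ)
    (hattained : ∃ κ, IsChannelNat κ ∧
      klNat (pushNat (jointW p) κ) (pushNat (splitW p) κ) = lam ∧ miNat (jointW p) κ = m)
    (q : X × Y → ℕ → ℝ) :
    SolvesIIB p q lam ↔ IsChannelNat q ∧
      klNat (pushNat (jointW p) q) (pushNat (splitW p) q) = lam ∧ miNat (jointW p) q = m := by
  obtain ⟨κ, hκ, hκlam, hκm⟩ := hattained
  refine ⟨fun ⟨hq, hqlam, hmin⟩ => ⟨hq, hqlam, ?_⟩, fun ⟨hq, hqlam, hqm⟩ => ⟨hq, hqlam, ?_⟩⟩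
  · exact le_antisymm (hκm ▸ hmin κ hκ hκlam) (hle q hq hqlam)
  · exact fun κ' hκ' hκ'lam => hqm ▸ hle κ' hκ' hκ'lam

/-- Assume `p(X,Y)` is fully supported. Let `∼` be the relation
`(x,y) ∼ (x',y') ↔ p(x,y)/(p(x)p(y)) = p(x',y')/(p(x')p(y'))`, with equivalence
classes indexed by `idx : X × Y → Fin n` (so `π = idx` is the deterministic channel
sending each `(x,y)` to its class index, and `S_j = idx⁻¹ j`). Then the solutions of
the Intertwining Information Bottleneck problem with parameter `λ = I(X;Y)` are
exactly the channels of the form `γ ∘ π` with `γ` a congruent channel from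
`{1,…,n}` to `T`. -/
theorem iib_solutions_full_support {X Y : Type} [Fintype X] [Fintype Y]
    (p : X → Y → ℝ) (hp : IsJointDist p)
    (hfull : ∀ x y, p x y ≠ 0)
    (n : ℕ) (idx : X × Y → Fin n)
    (hsurj : Function.Surjective idx)
    (hidx : ∀ a b : X × Y, idx a = idx b ↔ ratio p a = ratio p b) :
    ∀ q : X × Y → ℕ → ℝ,
      SolvesIIB p q (miXY p) ↔
        (IsChannelNat q ∧
          ∃ γ : Fin n → ℕ → ℝ,
            (∀ j t, 0 ≤ γ j t) ∧ (∀ j, (∑' t, γ j t) = 1) ∧ IsCongruentNat γ ∧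
            ∀ (a : X × Y) (t : ℕ), q a t = γ (idx a) t) := by
  have hw : ∀ a, 0 < jointW p a := fun a => (hp.1 a.1 a.2).lt_of_ne' (hfull a.1 a.2)
  have hs : ∀ a, 0 < splitW p a := fun a => mul_pos
    ((hw a).trans_le (single_le_sum (fun y _ => hp.1 a.1 y) (mem_univ a.2)))
    ((hw a).trans_le (single_le_sum (fun x _ => hp.1 x a.2) (mem_univ a.1)))
  have hmi : miXY p = ∑ a, jointW p a * log (jointW p a / splitW p a) :=
    (Fintype.sum_prod_type' fun x y => p x y * log (p x y / (margX p x * margY p y))).symm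
  have hfeasible : ∀ κ, IsChannelNat κ →
      (klNat (pushNat (jointW p) κ) (pushNat (splitW p) κ) = miXY p ↔ DeterminesClass κ idx) :=
    fun κ hκ => by
      rw [hmi, klNat_pushNat_eq_iff (fun a => (hw a).le) hs hκ]
      simp only [DeterminesClass, hidx]
      rfl
  obtain ⟨κ, hκ, hdet, hfac⟩ :=
    exists_channel_determinesClass_factorsThrough idx Fin.val_injective
  intro q
  rw [solvesIIB_iff_of_le (m := classEntropy (jointW p) idx)
    (fun κ hκ hκlam => classEntropy_le_miNat hw hκ ((hfeasible κ hκ).mp hκlam))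
    ⟨κ, hκ, (hfeasible κ hκ).mpr hdet, (miNat_eq_classEntropy_iff hw hκ hdet).mpr hfac⟩]
  refine and_congr_right fun hq => ?_
  rw [exists_congruent_factorization_iff hsurj hq, hfeasible q hq]
  exact and_congr_right fun hdet => miNat_eq_classEntropy_iff hw hq hdet
end
end

section
/- Assume the marginals p(X) and p(Y) are fully supported and p(Y) is the uniform distribution on Y. Then a pair (σ,τ) of bijections of X and Y is an equivariance of the channel p(Y|X) if and only if (x,y) ~ (σ(x),τ(y)) for all (x,y) ∈ X×Y, i.e. p(x,y)/(p(x)p(y)) = p(σ(x),τ(y))/(p(σ(x))p(τ(y))) for all (x,y). -/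
noncomputable section

theorem ratio_eq_ratio_iff_of_margY_eq {X Y : Type} [Fintype X] [Fintype Y]
    {p : X → Y → ℝ} {a b : X × Y} (hab : margY p a.2 = margY p b.2) (hb : margY p b.2 ≠ 0) :
    ratio p a = ratio p b ↔ p a.1 a.2 / margX p a.1 = p b.1 b.2 / margX p b.1 := by
  rw [ratio, ratio, hab, div_mul_eq_div_div, div_mul_eq_div_div, div_left_inj' hb]

theorem margY_ne_zero_of_uniform {X Y : Type} [Fintype X] [Fintype Y] {p : X → Y → ℝ}
    (hunif : ∀ y : Y, margY p y = (Fintype.card Y : ℝ)⁻¹) (y : Y) : margY p y ≠ 0 :=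
  hunif y ▸ inv_ne_zero (Nat.cast_ne_zero.mpr (Fintype.card_pos_iff.mpr ⟨y⟩).ne')

theorem equivariance_iff_equivalence_general {X Y : Type} [Fintype X] [Fintype Y]
    (p : X → Y → ℝ)
    (hunif : ∀ y : Y, margY p y = (Fintype.card Y : ℝ)⁻¹)
    (σ : Equiv.Perm X) (τ : Equiv.Perm Y) :
    (∀ x y, p (σ x) (τ y) / margX p (σ x) = p x y / margX p x) ↔
      (∀ x y, p x y / (margX p x * margY p y) =
        p (σ x) (τ y) / (margX p (σ x) * margY p (τ y))) := by
  refine forall₂_congr fun x y => eq_comm.trans ?_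
  exact (ratio_eq_ratio_iff_of_margY_eq (a := (x, y)) (b := (σ x, τ y))
    ((hunif y).trans (hunif (τ y)).symm) (margY_ne_zero_of_uniform hunif (τ y))).symm

/-- Assume the marginals `p(X)` and `p(Y)` are fully supported and
`p(Y)` is uniform on `Y`. Then `(σ,τ)` is an equivariance of the conditional channel
`p(Y|X)` (i.e. `p(τ y|σ x) = p(y|x)` with `p(y|x) = p(x,y)/p(x)`) if and only if
`(x,y) ∼ (σ x, τ y)` for all `(x,y)`, i.e.
`p(x,y)/(p(x)p(y)) = p(σ x, τ y)/(p(σ x) p(τ y))`. -/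
theorem equivariance_iff_equivalence {X Y : Type} [Fintype X] [Fintype Y]
    (p : X → Y → ℝ) (hp : IsJointDist p)
    (hX : ∀ x, margX p x ≠ 0) (hY : ∀ y, margY p y ≠ 0)
    (hunif : ∀ y : Y, margY p y = (Fintype.card Y : ℝ)⁻¹)
    (σ : Equiv.Perm X) (τ : Equiv.Perm Y) :
    (∀ x y, p (σ x) (τ y) / margX p (σ x) = p x y / margX p x) ↔
      (∀ x y, p x y / (margX p x * margY p y) =
        p (σ x) (τ y) / (margX p (σ x) * margY p (τ y))) :=
  equivariance_iff_equivalence_general p hunif σ τ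
end
end
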